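/- arXiv:2105.00364 — 4 statements merged into one kernel-verified Lean document; each statement's English description precedes it below -/
import Mathlib

section
/- Let Tₙ = (3/2)√n·Δ + Rₙ where Δ ≠ 0 is a fixed real and Rₙ is bounded. Let λₙ = c₁ n^{−a}, κₙ = c₂ n^{−b} with c₂ > 0 and 0 ≤ a ≤ b < 1/2. Then Dₙ = (9n λₙ²/4 − (9n/4)κₙ² Tₙ² + 3√n λₙ Tₙ)/((9n/4)κₙ² + 1) → −∞ at rate n, i.e., Dₙ/n converges to a strictly negative constant −(9/4)Δ²·limiting factor; in particular exp(Dₙ/2) → 0. -/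
open Real MeasureTheory Filter Topology

/-- standard normal pdf -/
noncomputable def phi (x : ℝ) : ℝ := (Real.sqrt (2 * Real.pi))⁻¹ * Real.exp (-x ^ 2 / 2)

/-- standard normal cdf -/
noncomputable def Phi (x : ℝ) : ℝ := ∫ t in Set.Iic x, phi t

/-!
With `tₙ = Tₙ / √n → (3/2)Δ` and `εₙ = (n κₙ²)⁻¹ → 0` (as `b < 1/2`), dividing numerator and
denominator of `Dₙ / n` by `n κₙ²` gives
`Dₙ / n = ((9/4) λₙ² εₙ - (9/4) tₙ² + 3 λₙ εₙ tₙ) / (9/4 + εₙ)`.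
Since `λₙ` is bounded (`a ≥ 0`), this tends to `-(3Δ/2)² < 0`, so `Dₙ → -∞` linearly.
-/

noncomputable def bfExponent (n l k T : ℝ) : ℝ :=
  (9 * n * l ^ 2 / 4 - 9 * n / 4 * k ^ 2 * T ^ 2 + 3 * √n * l * T) / (9 * n / 4 * k ^ 2 + 1)

lemma bfExponent_div_self {n : ℝ} (hn : 0 < n) {k : ℝ} (hk : k ≠ 0) (l T : ℝ) :
    bfExponent n l k T / n =
      (9 / 4 * (l * (l * (n * k ^ 2)⁻¹)) - 9 / 4 * (T / √n) ^ 2 +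
          3 * (l * (n * k ^ 2)⁻¹) * (T / √n)) / (9 / 4 + (n * k ^ 2)⁻¹) := by
  have hs : √n ^ 2 = n := sq_sqrt hn.le
  have hs0 : √n ≠ 0 := (sqrt_pos.2 hn).ne'
  unfold bfExponent
  field_simp
  rw [hs]
  ring

theorem tendsto_bfExponent_div_self {lam kap T : ℕ → ℝ} {τ : ℝ}
    (hT : Tendsto (fun n : ℕ => T n / √n) atTop (𝓝 τ))
    (hkap : Tendsto (fun n : ℕ => n * kap n ^ 2) atTop atTop)
    (hlam : IsBoundedUnder (· ≤ ·) atTop (‖lam ·‖)) :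
    Tendsto (fun n : ℕ => bfExponent n (lam n) (kap n) (T n) / n) atTop (𝓝 (-τ ^ 2)) := by
  have hε : Tendsto (fun n : ℕ => (n * kap n ^ 2)⁻¹) atTop (𝓝 0) := hkap.inv_tendsto_atTop
  have hlε := isBoundedUnder_le_mul_tendsto_zero hlam hε
  have hllε := isBoundedUnder_le_mul_tendsto_zero hlam hlε
  have hlim := ((((hllε.const_mul (9 / 4)).sub ((hT.pow 2).const_mul (9 / 4))).add
    ((hlε.const_mul 3).mul hT)).div (tendsto_const_nhds.add hε)
      (by norm_num : (9 / 4 : ℝ) + 0 ≠ 0))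
  have hval : (9 / 4 * 0 - 9 / 4 * τ ^ 2 + 3 * 0 * τ) / (9 / 4 + 0 : ℝ) = -τ ^ 2 := by ring
  rw [hval] at hlim
  refine hlim.congr' ?_
  filter_upwards [hkap.eventually_gt_atTop 0] with n hn
  have hn0 : (0 : ℝ) < n := pos_of_mul_pos_left hn (sq_nonneg _)
  have hk : kap n ≠ 0 := by rintro h; simp [h] at hn
  exact (bfExponent_div_self hn0 hk (lam n) (T n)).symm

lemma tendsto_atBot_of_tendsto_div_natCast {f : ℕ → ℝ} {L : ℝ} (hL : L < 0)
    (hf : Tendsto (fun n : ℕ => f n / n) atTop (𝓝 L)) : Tendsto f atTop atBot := by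
  refine (tendsto_natCast_atTop_atTop.atTop_mul_neg hL hf).congr' ?_
  filter_upwards [eventually_ne_atTop 0] with n hn
  field_simp

lemma tendsto_div_sqrt_of_abs_le {T R : ℕ → ℝ} {c M : ℝ} (hR : ∀ n, |R n| ≤ M)
    (hT : ∀ n : ℕ, T n = c * √n + R n) :
    Tendsto (fun n : ℕ => T n / √n) atTop (𝓝 c) := by
  have hR_bdd : IsBoundedUnder (· ≤ ·) atTop (‖R ·‖) :=
    isBoundedUnder_of_eventually_le (a := M) (Eventually.of_forall hR)
  have hsqrt : Tendsto (fun n : ℕ => (√n)⁻¹) atTop (𝓝 0) :=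
    (tendsto_sqrt_atTop.comp tendsto_natCast_atTop_atTop).inv_tendsto_atTop
  have hlim := (isBoundedUnder_le_mul_tendsto_zero hR_bdd hsqrt).const_add c
  rw [add_zero] at hlim
  refine hlim.congr' ?_
  filter_upwards [eventually_ne_atTop 0] with n hn
  have hs : √(n : ℝ) ≠ 0 := by positivity
  rw [hT n]
  field_simp

lemma tendsto_natCast_mul_sq_const_mul_rpow_neg {c b : ℝ} (hc : c ≠ 0) (hb : b < 1 / 2) :
    Tendsto (fun n : ℕ => n * (c * (n : ℝ) ^ (-b)) ^ 2) atTop atTop := by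
  have hpow : Tendsto (fun n : ℕ => (n : ℝ) ^ (1 - 2 * b)) atTop atTop :=
    (tendsto_rpow_atTop (by linarith)).comp tendsto_natCast_atTop_atTop
  refine (hpow.const_mul_atTop (by positivity : 0 < c ^ 2)).congr' ?_
  filter_upwards [eventually_ne_atTop 0] with n hn
  have hn0 : (0 : ℝ) < n := by positivity
  have hsplit : (n : ℝ) ^ (1 - 2 * b) = n * ((n : ℝ) ^ (-b)) ^ 2 := by
    rw [show 1 - 2 * b = 1 + -b * 2 by ring, rpow_add hn0, rpow_one, rpow_mul hn0.le, rpow_two]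
  rw [hsplit]
  ring

lemma isBoundedUnder_norm_const_mul_rpow_neg (c : ℝ) {a : ℝ} (ha : 0 ≤ a) :
    IsBoundedUnder (· ≤ ·) atTop (fun n : ℕ => ‖c * (n : ℝ) ^ (-a)‖) := by
  refine isBoundedUnder_of_eventually_le (a := ‖c‖) ?_
  filter_upwards [eventually_ge_atTop 1] with n hn
  rw [norm_mul]
  refine mul_le_of_le_one_right (norm_nonneg c) ?_
  rw [norm_of_nonneg (by positivity)]
  exact rpow_le_one_of_one_le_of_nonpos (by exact_mod_cast hn) (by linarith)

theorem stmt_7_general (Δ : ℝ) (hΔ : Δ ≠ 0) (R : ℕ → ℝ) (M : ℝ) (hR : ∀ n, |R n| ≤ M)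
    (T : ℕ → ℝ) (hT : ∀ n : ℕ, T n = (3 / 2) * Real.sqrt n * Δ + R n)
    (c₁ c₂ a b : ℝ) (hc₂ : 0 < c₂) (ha : 0 ≤ a) (hb : b < 1 / 2)
    (lam kap D : ℕ → ℝ)
    (hlam : ∀ n : ℕ, lam n = c₁ * (n : ℝ) ^ (-a))
    (hkap : ∀ n : ℕ, kap n = c₂ * (n : ℝ) ^ (-b))
    (hD : ∀ n : ℕ, D n =
        (9 * (n : ℝ) * lam n ^ 2 / 4 - 9 * (n : ℝ) / 4 * kap n ^ 2 * T n ^ 2 +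
            3 * Real.sqrt n * lam n * T n) /
          (9 * (n : ℝ) / 4 * kap n ^ 2 + 1)) :
    (∃ L : ℝ, L < 0 ∧ Tendsto (fun n : ℕ => D n / (n : ℝ)) atTop (nhds L)) ∧
    Tendsto (fun n : ℕ => Real.exp (D n / 2)) atTop (nhds 0) := by
  obtain rfl : D = fun n : ℕ => bfExponent n (lam n) (kap n) (T n) := funext hD
  obtain rfl : lam = fun n : ℕ => c₁ * (n : ℝ) ^ (-a) := funext hlam
  obtain rfl : kap = fun n : ℕ => c₂ * (n : ℝ) ^ (-b) := funext hkap
  have ht : Tendsto (fun n : ℕ => T n / √n) atTop (𝓝 (3 / 2 * Δ)) :=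
    tendsto_div_sqrt_of_abs_le hR fun n => by rw [hT n]; ring
  have hL : -(3 / 2 * Δ) ^ 2 < 0 := neg_neg_of_pos (by positivity)
  have hDn := tendsto_bfExponent_div_self ht
    (tendsto_natCast_mul_sq_const_mul_rpow_neg hc₂.ne' hb)
    (isBoundedUnder_norm_const_mul_rpow_neg c₁ ha)
  refine ⟨⟨_, hL, hDn⟩, ?_⟩
  exact tendsto_exp_atBot.comp
    ((tendsto_atBot_of_tendsto_div_natCast hL hDn).atBot_div_const two_pos)

theorem stmt_7 (Δ : ℝ) (hΔ : Δ ≠ 0) (R : ℕ → ℝ) (M : ℝ) (hR : ∀ n, |R n| ≤ M)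
    (T : ℕ → ℝ) (hT : ∀ n : ℕ, T n = (3 / 2) * Real.sqrt n * Δ + R n)
    (c₁ c₂ a b : ℝ) (hc₂ : 0 < c₂) (ha : 0 ≤ a) (hab : a ≤ b) (hb : b < 1 / 2)
    (lam kap D : ℕ → ℝ)
    (hlam : ∀ n : ℕ, lam n = c₁ * (n : ℝ) ^ (-a))
    (hkap : ∀ n : ℕ, kap n = c₂ * (n : ℝ) ^ (-b))
    (hD : ∀ n : ℕ, D n =
        (9 * (n : ℝ) * lam n ^ 2 / 4 - 9 * (n : ℝ) / 4 * kap n ^ 2 * T n ^ 2 +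
            3 * Real.sqrt n * lam n * T n) /
          (9 * (n : ℝ) / 4 * kap n ^ 2 + 1)) :
    (∃ L : ℝ, L < 0 ∧ Tendsto (fun n : ℕ => D n / (n : ℝ)) atTop (nhds L)) ∧
    Tendsto (fun n : ℕ => Real.exp (D n / 2)) atTop (nhds 0) :=
  stmt_7_general Δ hΔ R M hR T hT c₁ c₂ a b hc₂ ha hb lam kap D hlam hkap hD
end

section
/- Suppose Z is standard normal, and T* has distribution N(0,1) under H₀ and, with the alternative setting τ = τ₀ + Δ/√n, distribution N((3√n/2)·(Δ/√n), 1) = N((3/2)Δ, 1) under H₁, with prior Δ ~ N(0, δ²). Then the Bayes factor BF₀₁ = φ(T*) / ∫ φ(T* − (3√n/2)·(Δ/√n)) · (1/δ)φ(Δ/δ) dΔ equals √(1 + 9δ²/4) · exp(−δ²T*²/(2δ² + 8/9)). -/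
open Real MeasureTheory Filter Topology

theorem stmt_10 (T n δ : ℝ) (hn : 0 < n) (hδ : 0 < δ) :
    phi T /
        (∫ Δ : ℝ,
          phi (T - (3 * Real.sqrt n / 2) * (Δ / Real.sqrt n)) *
            ((1 / δ) * phi (Δ / δ))) =
      Real.sqrt (1 + 9 * δ ^ 2 / 4) *
        Real.exp (-(δ ^ 2 * T ^ 2) / (2 * δ ^ 2 + 8 / 9)) := by
  have hn' : Real.sqrt n ≠ 0 := (Real.sqrt_pos.mpr hn).ne'
  have hπ : (0:ℝ) < π := Real.pi_pos
  set a : ℝ := 9/8 + 1/(2*δ^2) with ha_def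
  have ha : 0 < a := by positivity
  set m : ℝ := 3*T/(4*a) with hm_def
  have h2π : Real.sqrt (2*π) * Real.sqrt (2*π) = 2*π :=
    Real.mul_self_sqrt (by positivity)
  have h1 : ∀ Δ : ℝ, phi (T - (3 * Real.sqrt n / 2) * (Δ / Real.sqrt n)) *
      ((1 / δ) * phi (Δ / δ)) =
      ((1/(2*π*δ)) * Real.exp (9*T^2/(16*a) - T^2/2)) * Real.exp (-(a*(Δ-m)^2)) := by
    intro Δ
    have hs : (3 * Real.sqrt n / 2) * (Δ / Real.sqrt n) = 3/2*Δ := by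
      field_simp
    rw [hs]
    simp only [phi]
    have e : Real.exp (-(T-3/2*Δ)^2/2) * Real.exp (-(Δ/δ)^2/2) =
        Real.exp (9*T^2/(16*a) - T^2/2) * Real.exp (-(a*(Δ-m)^2)) := by
      rw [← Real.exp_add, ← Real.exp_add]
      congr 1
      rw [hm_def, ha_def]
      field_simp
      ring
    calc (Real.sqrt (2*π))⁻¹ * Real.exp (-(T-3/2*Δ)^2/2) *
          ((1/δ) * ((Real.sqrt (2*π))⁻¹ * Real.exp (-(Δ/δ)^2/2)))
        = ((Real.sqrt (2*π) * Real.sqrt (2*π))⁻¹ * (1/δ)) *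
          (Real.exp (-(T-3/2*Δ)^2/2) * Real.exp (-(Δ/δ)^2/2)) := by ring
      _ = ((1/(2*π*δ)) * Real.exp (9*T^2/(16*a) - T^2/2)) * Real.exp (-(a*(Δ-m)^2)) := by
          rw [h2π, e]; ring
  have hgauss : (∫ Δ : ℝ, Real.exp (-(a*(Δ-m)^2))) = Real.sqrt (π/a) := by
    have h2 := MeasureTheory.integral_sub_right_eq_self (μ := volume)
      (fun x => Real.exp (-(a*x^2))) m
    rw [h2]
    simpa [neg_mul] using integral_gaussian a
  have hint : (∫ Δ : ℝ, phi (T - (3 * Real.sqrt n / 2) * (Δ / Real.sqrt n)) *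
      ((1 / δ) * phi (Δ / δ))) =
      ((1/(2*π*δ)) * Real.exp (9*T^2/(16*a) - T^2/2)) * Real.sqrt (π/a) := by
    simp only [h1]
    rw [MeasureTheory.integral_const_mul, hgauss]
  rw [hint, phi]
  have hexp : Real.exp (-T^2/2) =
      Real.exp (9*T^2/(16*a) - T^2/2) * Real.exp (-(δ^2*T^2)/(2*δ^2+8/9)) := by
    rw [← Real.exp_add]
    congr 1
    rw [ha_def]
    field_simp
    ring
  have hpa : (0:ℝ) < Real.sqrt (π/a) := Real.sqrt_pos.mpr (by positivity)
  have hcoef : Real.sqrt (2*π) * Real.sqrt (π/a) * Real.sqrt (1+9*δ^2/4) = 2*π*δ := by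
    rw [← Real.sqrt_mul (by positivity), ← Real.sqrt_mul (by positivity)]
    rw [show 2*π*(π/a)*(1+9*δ^2/4) = (2*π*δ)^2 from by
      rw [ha_def]; field_simp; ring]
    exact Real.sqrt_sq (by positivity)
  have hsq : (0:ℝ) < Real.sqrt (2*π) := Real.sqrt_pos.mpr (by positivity)
  rw [hexp]
  have hc2 : Real.sqrt (1+9*δ^2/4) = 2*π*δ / (Real.sqrt (2*π) * Real.sqrt (π/a)) := by
    rw [eq_div_iff (by positivity)]
    linarith [hcoef]
  rw [hc2]
  generalize Real.sqrt (2*π) = S at hsq ⊢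
  generalize Real.sqrt (π/a) = P at hpa ⊢
  have hE1 := Real.exp_ne_zero (9*T^2/(16*a) - T^2/2)
  field_simp
end

section
/- Under the conditions λₙ = c₁ n^{−a}, κₙ = c₂ n^{−b}, c₂ > 0, 0 ≤ a ≤ b < 1/2, τ₀ ∈ (−1,1), and Tₙ bounded (H₀ true), the Bayes factor BF₀₁(n) = √(9nκₙ²/4 + 1)·exp{½(λₙ²/κₙ² − μₙ²/σₙ²)}·[Φ((1−τ₀−μₙ)/σₙ) − Φ((−1−τ₀−μₙ)/σₙ)]/[Φ((1−τ₀−λₙ)/κₙ) − Φ((−1−τ₀−λₙ)/κₙ)] tends to +∞ as n → ∞. -/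
open Real MeasureTheory Filter Topology

/-! The Bayes factor is a product of three factors. With `s = 3√n/2`, the first is
`√(κₙ² s² + 1)`, of order `n^(1/2 - b)` since `nκₙ² → ∞`. Completing the square gives
`λₙ²/κₙ² - μₙ²/σₙ² = (λₙ s - Tₙ)² / (κₙ² s² + 1) - Tₙ² ≥ -M²`, so the exponential factor is
bounded below. Finally `μₙ → 0` and `σₙ → 0`, so the posterior mass of `(-1 - τ₀, 1 - τ₀)` in the
numerator tends to `1`, while the prior mass in the denominator lies in `(0, 1]`; the ratio is
eventually at least `1/2`. -/

open ProbabilityTheory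

lemma Phi_eq_cdf_gaussianReal : Phi = cdf (gaussianReal 0 1) := by
  ext x
  rw [cdf_eq_real, measureReal_def, gaussianReal_apply_eq_integral _ one_ne_zero,
    ENNReal.toReal_ofReal (setIntegral_nonneg measurableSet_Iic
      fun t _ => gaussianPDFReal_nonneg 0 1 t)]
  simp [Phi, phi, gaussianPDFReal]

lemma Phi_sub_Phi_pos {x y : ℝ} (h : x < y) : 0 < Phi y - Phi x := by
  have hpos : 0 < gaussianReal 0 1 (Set.Ioc x y) :=
    pos_iff_ne_zero.2 fun h0 =>
      (by simpa using gaussianReal_absolutelyContinuous' 0 one_ne_zero h0 : y ≤ x).not_gt h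
  rw [← measure_cdf (gaussianReal 0 1), StieltjesFunction.measure_Ioc] at hpos
  simpa [Phi_eq_cdf_gaussianReal] using hpos

lemma Phi_sub_Phi_le_one (x y : ℝ) : Phi y - Phi x ≤ 1 := by
  simp only [Phi_eq_cdf_gaussianReal]
  linarith [cdf_le_one (gaussianReal 0 1) y, cdf_nonneg (gaussianReal 0 1) x]

lemma tendsto_Phi_sub_Phi_div_nhds_one {ι : Type*} {l : Filter ι} {α β : ℝ} (hα : α < 0)
    (hβ : 0 < β) {m s : ι → ℝ} (hm : Tendsto m l (𝓝 0)) (hs : Tendsto s l (𝓝[>] 0)) :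
    Tendsto (fun i => Phi ((β - m i) / s i) - Phi ((α - m i) / s i)) l (𝓝 1) := by
  have hinv : Tendsto (fun i => (s i)⁻¹) l atTop := tendsto_inv_nhdsGT_zero.comp hs
  have hup : Tendsto (fun i => (β - m i) / s i) l atTop := by
    simpa only [div_eq_mul_inv] using
      (tendsto_const_nhds.sub hm).pos_mul_atTop (by simpa using hβ) hinv
  have hdown : Tendsto (fun i => (α - m i) / s i) l atBot := by
    simpa only [div_eq_mul_inv] using
      (tendsto_const_nhds.sub hm).neg_mul_atTop (by simpa using hα) hinv
  rw [Phi_eq_cdf_gaussianReal]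
  simpa using ((tendsto_cdf_atTop _).comp hup).sub ((tendsto_cdf_atBot _).comp hdown)

lemma neg_sq_le_mul_sub_sq_div {s t l u : ℝ} (hu : 0 ≤ u) (hD : 0 < s ^ 2 + u) :
    -t ^ 2 ≤ l ^ 2 * u - (s * t + l * u) ^ 2 / (s ^ 2 + u) := by
  have key : l ^ 2 * u - (s * t + l * u) ^ 2 / (s ^ 2 + u)
      = u * (l * s - t) ^ 2 / (s ^ 2 + u) - t ^ 2 := by
    field_simp
    ring
  rw [key]
  linarith [div_nonneg (mul_nonneg hu (sq_nonneg (l * s - t))) hD.le]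

lemma neg_sq_le_prior_sub_posterior_exponent {n κ t l : ℝ} (hn : 0 < n) :
    -t ^ 2 ≤ l ^ 2 / κ ^ 2 - ((3 * √n / 2 * t + l / κ ^ 2) / (9 * n / 4 + 1 / κ ^ 2)) ^ 2 /
      ((9 * n / 4 + 1 / κ ^ 2) ^ (-(1 : ℝ) / 2)) ^ 2 := by
  have hs : (3 * √n / 2) ^ 2 = 9 * n / 4 := by
    rw [div_pow, mul_pow, sq_sqrt hn.le]; ring
  have hD : 0 < 9 * n / 4 + 1 / κ ^ 2 := by positivity
  have hσ : ((9 * n / 4 + 1 / κ ^ 2) ^ (-(1 : ℝ) / 2)) ^ 2 = (9 * n / 4 + 1 / κ ^ 2)⁻¹ := by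
    rw [← rpow_natCast, ← rpow_mul hD.le]
    norm_num [rpow_neg_one]
  have := neg_sq_le_mul_sub_sq_div (s := 3 * √n / 2) (t := t) (l := l)
    (one_div_nonneg.2 (sq_nonneg κ)) (hs ▸ hD)
  rw [hs] at this
  rw [hσ]
  convert this using 2
  · ring
  · field_simp

lemma abs_posteriorMean_le {n κ t l M L : ℝ} (hn : 0 < n) (hκ : κ ≠ 0) (ht : |t| ≤ M)
    (hl : |l| ≤ L) :
    |(3 * √n / 2 * t + l / κ ^ 2) / (9 * n / 4 + 1 / κ ^ 2)| ≤
      2 * M / (3 * √n) + L / (9 * n * κ ^ 2 / 4 + 1) := by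
  have hsq : 0 < √n := sqrt_pos.2 hn
  have hM : 0 ≤ M := (abs_nonneg t).trans ht
  have hD : 9 * n / 4 ≤ 9 * n / 4 + 1 / κ ^ 2 := le_add_of_nonneg_right (by positivity)
  have hsplit : (3 * √n / 2 * t + l / κ ^ 2) / (9 * n / 4 + 1 / κ ^ 2) =
      3 * √n / 2 * t / (9 * n / 4 + 1 / κ ^ 2) + l / (9 * n * κ ^ 2 / 4 + 1) := by
    field_simp
  have hfirst : |3 * √n / 2 * t / (9 * n / 4 + 1 / κ ^ 2)| ≤ 2 * M / (3 * √n) := by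
    calc |3 * √n / 2 * t / (9 * n / 4 + 1 / κ ^ 2)|
        ≤ 3 * √n / 2 * M / (9 * n / 4) := by
          rw [abs_div, abs_mul, abs_of_pos (by positivity : 0 < 3 * √n / 2),
            abs_of_pos (by positivity : 0 < 9 * n / 4 + 1 / κ ^ 2)]
          gcongr
      _ = 2 * M / (3 * √n) := by
          field_simp
          rw [sq_sqrt hn.le]
          ring
  have hsecond : |l / (9 * n * κ ^ 2 / 4 + 1)| ≤ L / (9 * n * κ ^ 2 / 4 + 1) := by
    rw [abs_div, abs_of_pos (by positivity : 0 < 9 * n * κ ^ 2 / 4 + 1)]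
    exact div_le_div_of_nonneg_right hl (by positivity)
  rw [hsplit]
  exact (abs_add_le _ _).trans (add_le_add hfirst hsecond)

lemma tendsto_variance_ratio_atTop {kap : ℕ → ℝ}
    (hnkap : Tendsto (fun n : ℕ => (n : ℝ) * kap n ^ 2) atTop atTop) :
    Tendsto (fun n : ℕ => 9 * (n : ℝ) * kap n ^ 2 / 4 + 1) atTop atTop :=
  tendsto_atTop_add_const_right _ _
    ((hnkap.const_mul_atTop (by norm_num : (0 : ℝ) < 9 / 4)).congr fun n => by ring)

lemma tendsto_posteriorMean_nhds_zero {T lam kap : ℕ → ℝ} {M L : ℝ}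
    (hT : ∀ᶠ n in atTop, |T n| ≤ M) (hlam : ∀ᶠ n in atTop, |lam n| ≤ L)
    (hkap : ∀ᶠ n in atTop, kap n ≠ 0)
    (hnkap : Tendsto (fun n : ℕ => (n : ℝ) * kap n ^ 2) atTop atTop) :
    Tendsto (fun n : ℕ => (3 * √n / 2 * T n + lam n / kap n ^ 2) /
      (9 * (n : ℝ) / 4 + 1 / kap n ^ 2)) atTop (𝓝 0) := by
  have hsqrt : Tendsto (fun n : ℕ => 3 * √(n : ℝ)) atTop atTop :=
    (tendsto_sqrt_atTop.comp tendsto_natCast_atTop_atTop).const_mul_atTop (by norm_num)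
  have hbound := ((tendsto_const_nhds (x := 2 * M)).div_atTop hsqrt).add
    ((tendsto_const_nhds (x := L)).div_atTop (tendsto_variance_ratio_atTop hnkap))
  rw [add_zero] at hbound
  refine squeeze_zero_norm' ?_ hbound
  filter_upwards [hT, hlam, hkap, eventually_gt_atTop 0] with n hTn hlamn hkapn hn
  exact abs_posteriorMean_le (Nat.cast_pos.2 hn) hkapn hTn hlamn

lemma tendsto_posteriorSD_nhdsGT_zero (kap : ℕ → ℝ) :
    Tendsto (fun n : ℕ => (9 * (n : ℝ) / 4 + 1 / kap n ^ 2) ^ (-(1 : ℝ) / 2)) atTop (𝓝[>] 0) := by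
  have hD : Tendsto (fun n : ℕ => 9 * (n : ℝ) / 4 + 1 / kap n ^ 2) atTop atTop :=
    tendsto_atTop_mono (fun n => le_add_of_nonneg_right (by positivity))
      ((tendsto_natCast_atTop_atTop.const_mul_atTop (by norm_num : (0 : ℝ) < 9 / 4)).congr
        fun n => by ring)
  refine tendsto_nhdsWithin_iff.2 ⟨?_, ?_⟩
  · simpa [neg_div, Function.comp_def] using
      (tendsto_rpow_neg_atTop (by norm_num : (0 : ℝ) < 1 / 2)).comp hD
  · filter_upwards [hD.eventually_gt_atTop 0] with n hn
    exact rpow_pos_of_pos hn _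

theorem tendsto_bayesFactor_atTop {τ₀ : ℝ} (hτ : τ₀ ∈ Set.Ioo (-1 : ℝ) 1) {T : ℕ → ℝ} {M L : ℝ}
    (hT : ∀ᶠ n in atTop, |T n| ≤ M) {lam kap μ σ BF : ℕ → ℝ} (hlam : ∀ᶠ n in atTop, |lam n| ≤ L)
    (hkap : ∀ᶠ n in atTop, 0 < kap n)
    (hnkap : Tendsto (fun n : ℕ => (n : ℝ) * kap n ^ 2) atTop atTop)
    (hμ : ∀ n : ℕ, μ n = ((3 * Real.sqrt n / 2) * T n + lam n / kap n ^ 2) /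
        (9 * (n : ℝ) / 4 + 1 / kap n ^ 2))
    (hσ : ∀ n : ℕ, σ n = (9 * (n : ℝ) / 4 + 1 / kap n ^ 2) ^ (-(1 : ℝ) / 2))
    (hBF : ∀ n : ℕ, BF n =
        Real.sqrt (9 * (n : ℝ) * kap n ^ 2 / 4 + 1) *
          Real.exp ((1 / 2) * (lam n ^ 2 / kap n ^ 2 - μ n ^ 2 / σ n ^ 2)) *
          ((Phi ((1 - τ₀ - μ n) / σ n) - Phi ((-1 - τ₀ - μ n) / σ n)) /
            (Phi ((1 - τ₀ - lam n) / kap n) - Phi ((-1 - τ₀ - lam n) / kap n)))) :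
    Tendsto BF atTop atTop := by
  obtain ⟨hτ₁, hτ₂⟩ := hτ
  have hμ₀ : Tendsto μ atTop (𝓝 0) := by
    simpa only [← funext hμ] using tendsto_posteriorMean_nhds_zero hT hlam
      (hkap.mono fun n h => h.ne') hnkap
  have hσ₀ : Tendsto σ atTop (𝓝[>] 0) := by
    simpa only [← funext hσ] using tendsto_posteriorSD_nhdsGT_zero kap
  have hnum : ∀ᶠ n in atTop, 1 / 2 ≤ Phi ((1 - τ₀ - μ n) / σ n) - Phi ((-1 - τ₀ - μ n) / σ n) :=
    (tendsto_Phi_sub_Phi_div_nhds_one (by linarith) (by linarith) hμ₀ hσ₀).eventually_const_le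
      (by norm_num)
  have hS := tendsto_sqrt_atTop.comp (tendsto_variance_ratio_atTop hnkap)
  refine tendsto_atTop_mono' _ ?_
    (hS.atTop_mul_const (by positivity : 0 < exp (-M ^ 2 / 2) * (1 / 2)))
  filter_upwards [hT, hnum, hkap, eventually_gt_atTop 0] with n hTn hnumn hkapn hn
  have hexp : exp (-M ^ 2 / 2) ≤ exp ((1 / 2) * (lam n ^ 2 / kap n ^ 2 - μ n ^ 2 / σ n ^ 2)) := by
    have hTsq : T n ^ 2 ≤ M ^ 2 := sq_le_sq' (abs_le.1 hTn).1 (abs_le.1 hTn).2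
    have := hμ n ▸ hσ n ▸
      neg_sq_le_prior_sub_posterior_exponent (κ := kap n) (l := lam n) (t := T n)
        (Nat.cast_pos.2 hn)
    exact exp_le_exp.2 (by linarith)
  have hratio : 1 / 2 ≤ (Phi ((1 - τ₀ - μ n) / σ n) - Phi ((-1 - τ₀ - μ n) / σ n)) /
      (Phi ((1 - τ₀ - lam n) / kap n) - Phi ((-1 - τ₀ - lam n) / kap n)) :=
    hnumn.trans (le_div_self (by linarith) (Phi_sub_Phi_pos (by gcongr; linarith))
      (Phi_sub_Phi_le_one _ _))
  rw [hBF n, mul_assoc]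
  exact mul_le_mul_of_nonneg_left (mul_le_mul hexp hratio (by norm_num) (exp_pos _).le)
    (sqrt_nonneg _)

theorem stmt_16_general (τ₀ : ℝ) (hτ : τ₀ ∈ Set.Ioo (-1 : ℝ) 1)
    (T : ℕ → ℝ) (M : ℝ) (hT : ∀ n, |T n| ≤ M)
    (c₁ c₂ a b : ℝ) (hc₂ : 0 < c₂) (ha : 0 ≤ a) (hb : b < 1 / 2)
    (lam kap μ σ BF : ℕ → ℝ)
    (hlam : ∀ n : ℕ, lam n = c₁ * (n : ℝ) ^ (-a))
    (hkap : ∀ n : ℕ, kap n = c₂ * (n : ℝ) ^ (-b))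
    (hμ : ∀ n : ℕ, μ n = ((3 * Real.sqrt n / 2) * T n + lam n / kap n ^ 2) /
        (9 * (n : ℝ) / 4 + 1 / kap n ^ 2))
    (hσ : ∀ n : ℕ, σ n = (9 * (n : ℝ) / 4 + 1 / kap n ^ 2) ^ (-(1 : ℝ) / 2))
    (hBF : ∀ n : ℕ, BF n =
        Real.sqrt (9 * (n : ℝ) * kap n ^ 2 / 4 + 1) *
          Real.exp ((1 / 2) * (lam n ^ 2 / kap n ^ 2 - μ n ^ 2 / σ n ^ 2)) *
          ((Phi ((1 - τ₀ - μ n) / σ n) - Phi ((-1 - τ₀ - μ n) / σ n)) /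
            (Phi ((1 - τ₀ - lam n) / kap n) - Phi ((-1 - τ₀ - lam n) / kap n)))) :
    Tendsto BF atTop atTop := by
  have hlam_le : ∀ᶠ n in atTop, |lam n| ≤ |c₁| := by
    filter_upwards [eventually_ge_atTop 1] with n hn
    have hn' : (1 : ℝ) ≤ n := by exact_mod_cast hn
    rw [hlam, abs_mul, abs_of_nonneg (rpow_nonneg (Nat.cast_nonneg n) _)]
    exact mul_le_of_le_one_right (abs_nonneg c₁)
      (rpow_le_one_of_one_le_of_nonpos hn' (by linarith))
  have hkap_pos : ∀ᶠ n in atTop, 0 < kap n := by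
    filter_upwards [eventually_gt_atTop 0] with n hn
    rw [hkap]
    exact mul_pos hc₂ (rpow_pos_of_pos (Nat.cast_pos.2 hn) _)
  have hnkap : Tendsto (fun n : ℕ => (n : ℝ) * kap n ^ 2) atTop atTop := by
    refine (((tendsto_rpow_atTop (by linarith : 0 < 1 - 2 * b)).comp
      tendsto_natCast_atTop_atTop).const_mul_atTop (pow_pos hc₂ 2)).congr' ?_
    filter_upwards [eventually_gt_atTop 0] with n hn
    have hn' : (0 : ℝ) < n := Nat.cast_pos.2 hn
    rw [Function.comp_apply, hkap, show 1 - 2 * b = 1 + -b + -b by ring, rpow_add hn',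
      rpow_add hn', rpow_one]
    ring
  exact tendsto_bayesFactor_atTop hτ (.of_forall hT) hlam_le hkap_pos hnkap hμ hσ hBF

theorem stmt_16 (τ₀ : ℝ) (hτ : τ₀ ∈ Set.Ioo (-1 : ℝ) 1)
    (T : ℕ → ℝ) (M : ℝ) (hT : ∀ n, |T n| ≤ M)
    (c₁ c₂ a b : ℝ) (hc₂ : 0 < c₂) (ha : 0 ≤ a) (hab : a ≤ b) (hb : b < 1 / 2)
    (lam kap μ σ BF : ℕ → ℝ)
    (hlam : ∀ n : ℕ, lam n = c₁ * (n : ℝ) ^ (-a))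
    (hkap : ∀ n : ℕ, kap n = c₂ * (n : ℝ) ^ (-b))
    (hμ : ∀ n : ℕ, μ n = ((3 * Real.sqrt n / 2) * T n + lam n / kap n ^ 2) /
        (9 * (n : ℝ) / 4 + 1 / kap n ^ 2))
    (hσ : ∀ n : ℕ, σ n = (9 * (n : ℝ) / 4 + 1 / kap n ^ 2) ^ (-(1 : ℝ) / 2))
    (hBF : ∀ n : ℕ, BF n =
        Real.sqrt (9 * (n : ℝ) * kap n ^ 2 / 4 + 1) *
          Real.exp ((1 / 2) * (lam n ^ 2 / kap n ^ 2 - μ n ^ 2 / σ n ^ 2)) *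
          ((Phi ((1 - τ₀ - μ n) / σ n) - Phi ((-1 - τ₀ - μ n) / σ n)) /
            (Phi ((1 - τ₀ - lam n) / kap n) - Phi ((-1 - τ₀ - lam n) / kap n)))) :
    Tendsto BF atTop atTop :=
  stmt_16_general τ₀ hτ T M hT c₁ c₂ a b hc₂ ha hb lam kap μ σ BF hlam hkap hμ hσ hBF
end

section
/- If the prior hyperparameters are constants λₙ = μ₀ and κₙ = σ₀ > 0 independent of n, then with τ₀ ∈ (−1,1) the Bayes factor BF₀₁(n) of Theorem 1 tends to +∞ when Tₙ is bounded, and tends to 0 when Tₙ = (3/2)√n·Δ + Rₙ with fixed Δ ∈ (−1−τ₀, 1−τ₀)\{0} and Rₙ bounded. -/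
/-!
Write `s = 1 / σₙ ≈ (3/2)√n` and `m = μₙ / σₙ`. Then `BF₀₁(n)` is a positive constant times
`s · exp (-m² / 2) · P(a s - m < Z < b s - m)` with `Z` standard normal and
`a = -1 - τ₀ < 0 < b = 1 - τ₀`. If `Tₙ` is bounded then so is `m`, the probability tends to `1`,
and `BF₀₁(n)` grows like `√n`. Under the alternative `m - Δ s` stays bounded with `Δ ≠ 0`, so
`|m|` grows linearly in `s` and the Gaussian factor `exp (-m² / 2)` kills the prefactor `s`.
-/

open Real MeasureTheory Filter Topology

open ProbabilityTheory

lemma Phi_lt_Phi {a b : ℝ} (h : a < b) : Phi a < Phi b := by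
  have hpos : 0 < gaussianReal 0 1 (Set.Ioc a b) :=
    (gaussianReal_absolutelyContinuous' 0 one_ne_zero).pos_mono (by simp [h])
  rw [← measure_cdf (gaussianReal 0 1), StieltjesFunction.measure_Ioc, ENNReal.ofReal_pos] at hpos
  rw [Phi_eq_cdf_gaussianReal]
  linarith

lemma abs_Phi_sub_Phi_le_one (x y : ℝ) : |Phi x - Phi y| ≤ 1 := by
  rw [Phi_eq_cdf_gaussianReal, abs_le]
  constructor <;> linarith [cdf_nonneg (gaussianReal 0 1) x, cdf_le_one (gaussianReal 0 1) x,
    cdf_nonneg (gaussianReal 0 1) y, cdf_le_one (gaussianReal 0 1) y]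

lemma tendsto_Phi_sub_Phi_nhds_one {ι : Type*} {l : Filter ι} {u v : ι → ℝ}
    (hu : Tendsto u l atTop) (hv : Tendsto v l atBot) :
    Tendsto (fun i => Phi (u i) - Phi (v i)) l (𝓝 1) := by
  rw [Phi_eq_cdf_gaussianReal]
  simpa using ((tendsto_cdf_atTop _).comp hu).sub ((tendsto_cdf_atBot _).comp hv)

lemma tendsto_add_mul_exp_neg_sq_div_two (K : ℝ) :
    Tendsto (fun t : ℝ => (t + K) * exp (-t ^ 2 / 2)) atTop (𝓝 0) := by
  have h (k : ℝ) : Tendsto (fun t : ℝ => |t| ^ k * exp (-t ^ 2 / 2)) atTop (𝓝 0) := by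
    have := (tendsto_rpow_abs_mul_exp_neg_mul_sq_cocompact one_half_pos k).mono_left
      atTop_le_cocompact
    simpa only [neg_mul, one_div, inv_mul_eq_div, neg_div] using this
  have hsum := (h 1).add ((h 0).const_mul K)
  rw [zero_add, mul_zero] at hsum
  refine hsum.congr' ?_
  filter_upwards [eventually_ge_atTop 0] with t ht
  rw [rpow_one, rpow_zero, abs_of_nonneg ht]
  ring

lemma abs_mul_add_mul_div_sqrt_le {p r : ℝ} (hp : 0 ≤ p) (hr : 0 ≤ r) (u v : ℝ) :
    |(p * u + r * v) / √(p ^ 2 + r ^ 2)| ≤ |u| + |v| := by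
  rcases (sqrt_nonneg (p ^ 2 + r ^ 2)).eq_or_lt with hzero | hpos
  · rw [← hzero, div_zero, abs_zero]
    positivity
  have hp' : p ≤ √(p ^ 2 + r ^ 2) := le_sqrt_of_sq_le (by nlinarith)
  have hr' : r ≤ √(p ^ 2 + r ^ 2) := le_sqrt_of_sq_le (by nlinarith)
  rw [abs_div, abs_of_pos hpos, div_le_iff₀ hpos]
  calc |p * u + r * v| ≤ p * |u| + r * |v| := by
        simpa [abs_mul, abs_of_nonneg hp, abs_of_nonneg hr] using abs_add_le (p * u) (r * v)
    _ ≤ √(p ^ 2 + r ^ 2) * |u| + √(p ^ 2 + r ^ 2) * |v| := by gcongr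
    _ = _ := by ring

lemma mul_add_mul_div_sqrt_sub_mul_sqrt (p r Δ u v : ℝ) :
    (p * (p * Δ + u) + r * v) / √(p ^ 2 + r ^ 2) - Δ * √(p ^ 2 + r ^ 2) =
      (p * u + r * (v - r * Δ)) / √(p ^ 2 + r ^ 2) := by
  rcases eq_or_ne (√(p ^ 2 + r ^ 2)) 0 with hzero | hne
  · simp [hzero]
  rw [eq_div_iff hne, sub_mul, div_mul_cancel₀ _ hne, mul_assoc, mul_self_sqrt (by positivity)]
  ring

-- `1 / σₙ` at `x = n`: the posterior precision is `9 n / 4 + 1 / σ₀ ^ 2`.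
noncomputable def postScale (σ₀ x : ℝ) : ℝ := √((3 * √x / 2) ^ 2 + σ₀⁻¹ ^ 2)

lemma sq_postScale (σ₀ : ℝ) {x : ℝ} (hx : 0 ≤ x) :
    postScale σ₀ x ^ 2 = 9 * x / 4 + 1 / σ₀ ^ 2 := by
  rw [postScale, sq_sqrt (by positivity), div_pow, mul_pow, sq_sqrt hx, inv_pow]
  ring

lemma tendsto_postScale_atTop (σ₀ : ℝ) : Tendsto (postScale σ₀) atTop atTop :=
  tendsto_atTop_mono (fun _ => le_sqrt_of_sq_le (le_add_of_nonneg_right (sq_nonneg _)))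
    ((tendsto_sqrt_atTop.const_mul_atTop three_pos).atTop_div_const two_pos)

-- `BF₀₁(n)` is a constant multiple of `bfCore (-1 - τ₀) (1 - τ₀) (1 / σₙ) (μₙ / σₙ)`.
noncomputable def bfCore (a b s m : ℝ) : ℝ :=
  s * exp (-m ^ 2 / 2) * (Phi (b * s - m) - Phi (a * s - m))

lemma bayesFactor_eq_mul_bfCore {τ₀ μ₀ σ₀ x t μ σ : ℝ} (hσ₀ : 0 < σ₀) (hx : 0 ≤ x)
    (hμ : μ = ((3 * √x / 2) * t + μ₀ / σ₀ ^ 2) / (9 * x / 4 + 1 / σ₀ ^ 2))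
    (hσ : σ = (9 * x / 4 + 1 / σ₀ ^ 2) ^ (-(1 : ℝ) / 2)) :
    √(9 * x * σ₀ ^ 2 / 4 + 1) * exp ((1 / 2) * (μ₀ ^ 2 / σ₀ ^ 2 - μ ^ 2 / σ ^ 2)) *
        ((Phi ((1 - τ₀ - μ) / σ) - Phi ((-1 - τ₀ - μ) / σ)) /
          (Phi ((1 - τ₀ - μ₀) / σ₀) - Phi ((-1 - τ₀ - μ₀) / σ₀))) =
      σ₀ * exp (μ₀ ^ 2 / σ₀ ^ 2 / 2) /
          (Phi ((1 - τ₀ - μ₀) / σ₀) - Phi ((-1 - τ₀ - μ₀) / σ₀)) *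
        bfCore (-1 - τ₀) (1 - τ₀) (postScale σ₀ x)
          ((3 * √x / 2 * t + σ₀⁻¹ * (μ₀ / σ₀)) / postScale σ₀ x) := by
  set s := postScale σ₀ x
  have hs : 0 < s := sqrt_pos.2 (by positivity)
  have hsq : s ^ 2 = 9 * x / 4 + 1 / σ₀ ^ 2 := sq_postScale σ₀ hx
  have hσs : σ = s⁻¹ := by
    rw [hσ, ← hsq, neg_div, rpow_neg (sq_nonneg _), ← sqrt_eq_rpow,
      sqrt_sq hs.le]
  have hμs : μ * s = (3 * √x / 2 * t + σ₀⁻¹ * (μ₀ / σ₀)) / s := by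
    rw [hμ, ← hsq]
    field_simp
  have hsqrt : √(9 * x * σ₀ ^ 2 / 4 + 1) = σ₀ * s := by
    rw [← sqrt_sq (mul_pos hσ₀ hs).le, mul_pow, hsq]
    congr 1
    field_simp
  have harg (c : ℝ) : (c - μ) / σ = c * s - μ * s := by
    rw [hσs, div_inv_eq_mul, sub_mul]
  have hexp : exp (1 / 2 * (μ₀ ^ 2 / σ₀ ^ 2 - μ ^ 2 / σ ^ 2)) =
      exp (μ₀ ^ 2 / σ₀ ^ 2 / 2) * exp (-(μ * s) ^ 2 / 2) := by
    rw [← exp_add, hσs]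
    congr 1
    field_simp
    ring
  rw [hsqrt, harg, harg, hexp, ← hμs, bfCore]
  ring

section
variable {ι : Type*} {l : Filter ι} {a b K : ℝ} {s m : ι → ℝ}

lemma tendsto_bfCore_atTop (ha : a < 0) (hb : 0 < b) (hs : Tendsto s l atTop)
    (hm : ∀ i, |m i| ≤ K) : Tendsto (fun i => bfCore a b (s i) (m i)) l atTop := by
  have hwindow : Tendsto (fun i => Phi (b * s i - m i) - Phi (a * s i - m i)) l (𝓝 1) := by
    refine tendsto_Phi_sub_Phi_nhds_one ?_ ?_
    · simpa only [sub_eq_neg_add] using tendsto_atTop_add_left_of_le l (-K)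
        (fun i => neg_le_neg (abs_le.1 (hm i)).2) (hs.const_mul_atTop hb)
    · simpa only [sub_eq_neg_add] using tendsto_atBot_add_left_of_ge l K
        (fun i => neg_le.1 (abs_le.1 (hm i)).1) (hs.const_mul_atTop_of_neg ha)
  have hhalf := hwindow.eventually (eventually_ge_nhds (show (1 / 2 : ℝ) < 1 by norm_num))
  refine tendsto_atTop_mono' l ?_ (hs.atTop_mul_const (r := exp (-K ^ 2 / 2) / 2) (by positivity))
  filter_upwards [hhalf, hs.eventually_ge_atTop 0] with i hi hsi
  have hexp : exp (-K ^ 2 / 2) ≤ exp (-m i ^ 2 / 2) :=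
    exp_le_exp.2 (by linarith [sq_le_sq' (abs_le.1 (hm i)).1 (abs_le.1 (hm i)).2])
  calc s i * (exp (-K ^ 2 / 2) / 2) = s i * exp (-K ^ 2 / 2) * (1 / 2) := by ring
    _ ≤ bfCore a b (s i) (m i) := by unfold bfCore; gcongr

lemma tendsto_bfCore_zero {Δ : ℝ} (hΔ : Δ ≠ 0) (hs : Tendsto s l atTop)
    (hm : ∀ i, |m i - Δ * s i| ≤ K) : Tendsto (fun i => bfCore a b (s i) (m i)) l (𝓝 0) := by
  have hΔ' : 0 < |Δ| := abs_pos.2 hΔ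
  have hlin (i : ι) : |Δ| * |s i| ≤ |m i| + K := by
    rw [← abs_mul]
    linarith [abs_sub_abs_le_abs_sub (Δ * s i) (m i), abs_sub_comm (Δ * s i) (m i), hm i]
  have hmtop : Tendsto (fun i => |m i|) l atTop := by
    refine tendsto_atTop_mono (fun i => ?_)
      (tendsto_atTop_add_const_right _ (-K) (hs.const_mul_atTop hΔ'))
    linarith [hlin i, mul_le_mul_of_nonneg_left (le_abs_self (s i)) hΔ'.le]
  have hdecay := ((tendsto_add_mul_exp_neg_sq_div_two K).comp hmtop).div_const |Δ|
  rw [zero_div] at hdecay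
  refine squeeze_zero_norm (fun i => ?_) hdecay
  have hsle : |s i| ≤ (|m i| + K) / |Δ| := by rw [le_div_iff₀ hΔ', mul_comm]; exact hlin i
  calc ‖bfCore a b (s i) (m i)‖
      = |s i| * exp (-m i ^ 2 / 2) * |Phi (b * s i - m i) - Phi (a * s i - m i)| := by
        rw [bfCore, Real.norm_eq_abs, abs_mul, abs_mul, abs_of_pos (exp_pos _)]
    _ ≤ (|m i| + K) / |Δ| * exp (-m i ^ 2 / 2) * 1 :=
        mul_le_mul (mul_le_mul_of_nonneg_right hsle (exp_pos _).le)
          (abs_Phi_sub_Phi_le_one _ _) (abs_nonneg _)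
          (mul_nonneg ((abs_nonneg _).trans hsle) (exp_pos _).le)
    _ = _ := by rw [Function.comp_apply, sq_abs]; ring

end

theorem stmt_18 (τ₀ μ₀ σ₀ : ℝ) (hτ : τ₀ ∈ Set.Ioo (-1 : ℝ) 1) (hσ₀ : 0 < σ₀)
    (lam kap : ℕ → ℝ)
    (hlam : ∀ n : ℕ, lam n = μ₀) (hkap : ∀ n : ℕ, kap n = σ₀)
    (T : ℕ → ℝ) (μ σ BF : ℕ → ℝ)
    (hμ : ∀ n : ℕ, μ n = ((3 * Real.sqrt n / 2) * T n + lam n / kap n ^ 2) /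
        (9 * (n : ℝ) / 4 + 1 / kap n ^ 2))
    (hσ : ∀ n : ℕ, σ n = (9 * (n : ℝ) / 4 + 1 / kap n ^ 2) ^ (-(1 : ℝ) / 2))
    (hBF : ∀ n : ℕ, BF n =
        Real.sqrt (9 * (n : ℝ) * kap n ^ 2 / 4 + 1) *
          Real.exp ((1 / 2) * (lam n ^ 2 / kap n ^ 2 - μ n ^ 2 / σ n ^ 2)) *
          ((Phi ((1 - τ₀ - μ n) / σ n) - Phi ((-1 - τ₀ - μ n) / σ n)) /
            (Phi ((1 - τ₀ - lam n) / kap n) - Phi ((-1 - τ₀ - lam n) / kap n)))) :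
    ((∃ M : ℝ, ∀ n, |T n| ≤ M) → Tendsto BF atTop atTop) ∧
    (∀ Δ : ℝ, -1 - τ₀ < Δ → Δ < 1 - τ₀ → Δ ≠ 0 →
      ∀ R : ℕ → ℝ, (∃ M : ℝ, ∀ n, |R n| ≤ M) →
        (∀ n : ℕ, T n = (3 / 2) * Real.sqrt n * Δ + R n) →
        Tendsto BF atTop (nhds 0)) := by
  obtain ⟨hτ₁, hτ₂⟩ := hτ
  set C := σ₀ * exp (μ₀ ^ 2 / σ₀ ^ 2 / 2) /
    (Phi ((1 - τ₀ - μ₀) / σ₀) - Phi ((-1 - τ₀ - μ₀) / σ₀))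
  have hC : 0 < C := div_pos (by positivity) (sub_pos.2 (Phi_lt_Phi (by gcongr; linarith)))
  have hs := (tendsto_postScale_atTop σ₀).comp tendsto_natCast_atTop_atTop
  have hBF_eq : BF = fun n : ℕ => C * bfCore (-1 - τ₀) (1 - τ₀) (postScale σ₀ n)
      ((3 * √(n : ℝ) / 2 * T n + σ₀⁻¹ * (μ₀ / σ₀)) / postScale σ₀ n) := by
    ext n
    rw [hBF, hlam, hkap]
    exact bayesFactor_eq_mul_bfCore hσ₀ n.cast_nonneg (by rw [hμ, hlam, hkap]) (by rw [hσ, hkap])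
  rw [hBF_eq]
  refine ⟨fun ⟨M, hM⟩ => ?_, fun Δ _ _ hΔ R ⟨M, hR⟩ hT => ?_⟩
  · have hbound (n : ℕ) : |(3 * √(n : ℝ) / 2 * T n + σ₀⁻¹ * (μ₀ / σ₀)) / postScale σ₀ n| ≤
        M + |μ₀ / σ₀| :=
      (abs_mul_add_mul_div_sqrt_le (by positivity) (by positivity) _ _).trans
        (by gcongr; exact hM n)
    exact (tendsto_bfCore_atTop (by linarith) (by linarith) hs hbound).const_mul_atTop hC
  · have hbound (n : ℕ) : |(3 * √(n : ℝ) / 2 * T n + σ₀⁻¹ * (μ₀ / σ₀)) / postScale σ₀ n -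
        Δ * postScale σ₀ n| ≤ M + |μ₀ / σ₀ - σ₀⁻¹ * Δ| := by
      rw [hT, show 3 / 2 * √(n : ℝ) * Δ = 3 * √(n : ℝ) / 2 * Δ by ring, postScale,
        mul_add_mul_div_sqrt_sub_mul_sqrt]
      exact (abs_mul_add_mul_div_sqrt_le (by positivity) (by positivity) _ _).trans
        (by gcongr; exact hR n)
    simpa using (tendsto_bfCore_zero hΔ hs hbound).const_mul C
end
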